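/- arXiv:1103.4258 — 4 statements merged into one kernel-verified Lean document; each statement's English description precedes it below -/
import Mathlib

section
/- If A is a totally unimodular matrix having at most two nonzero entries in every column, then A is strongly unimodular. -/
/-- A matrix is strongly unimodular if it is totally unimodular and remains totally
unimodular after replacing any single nonzero entry by `0`. -/
def IsStronglyUnimodular {m n : Type*} [DecidableEq m] [DecidableEq n]
    (A : Matrix m n ℚ) : Prop :=
  A.IsTotallyUnimodular ∧
    ∀ i j, A i j ≠ 0 → (A.updateRow i (Function.update (A i) j 0)).IsTotallyUnimodular

/-!
Zeroing a nonzero entry of a column with at most two nonzero entries leaves a column with at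
most one nonzero entry, which is `±1` by total unimodularity: a signed unit vector or zero.
Replacing a column of a TU matrix `A` by such a vector `e` gives a column-submatrix of `[A | e]`,
which is TU by Laplace expansion along the appended column (Mathlib's `fromRows_unitlike`).
-/

open Finset Matrix

namespace Matrix

variable {m n R : Type*} [CommRing R]

lemma IsTotallyUnimodular.fromCols_unitlike {n' : Type*} [DecidableEq m] {A : Matrix m n R}
    {B : Matrix m n' R} (hA : A.IsTotallyUnimodular)
    (hB : Nonempty m → ∀ j : n', ∃ i : m, ∃ s : SignType, Bᵀ j = Pi.single i s.cast) :
    (fromCols A B).IsTotallyUnimodular := by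
  rw [← transpose_isTotallyUnimodular_iff, transpose_fromCols]
  exact hA.transpose.fromRows_unitlike hB

lemma IsTotallyUnimodular.updateCol_single [DecidableEq m] [DecidableEq n]
    {A : Matrix m n R} (hA : A.IsTotallyUnimodular) (j : n) (i : m) (s : SignType) :
    (A.updateCol j (Pi.single i (s : R))).IsTotallyUnimodular := by
  have hsub : A.updateCol j (Pi.single i (s : R)) =
      (fromCols A (replicateCol Unit (Pi.single i (s : R)))).submatrix id
        fun k => if k = j then .inr () else .inl k := by
    ext a b
    by_cases hb : b = j <;> simp [hb]
  rw [hsub]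
  exact (hA.fromCols_unitlike fun _ _ => ⟨i, s, rfl⟩).submatrix _ _

lemma updateRow_update_eq_updateCol_update {α : Type*} [DecidableEq m] [DecidableEq n]
    (A : Matrix m n α) (i : m) (j : n) (a : α) :
    A.updateRow i (Function.update (A i) j a) = A.updateCol j (Function.update (Aᵀ j) i a) := by
  ext k l
  by_cases hk : k = i <;> by_cases hl : l = j <;> simp [updateRow_apply, hk, hl]

end Matrix

lemma Finset.filter_update_zero_ne_zero {m R : Type*} [DecidableEq m] [Fintype m] [Zero R]
    [DecidableEq R] (v : m → R) (i : m) :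
    ({k | Function.update v i 0 k ≠ 0} : Finset m) = ({k | v k ≠ 0} : Finset m).erase i := by
  ext k
  by_cases hk : k = i <;> simp [hk]

lemma exists_eq_single_signType_of_card_ne_zero_le_one {m R : Type*} [DecidableEq m]
    [Fintype m] [Nonempty m] [Zero R] [One R] [Neg R] [DecidableEq R] {v : m → R}
    (hv : ∀ i, v i ∈ Set.range SignType.cast) (h : #{i | v i ≠ 0} ≤ 1) :
    ∃ i, ∃ s : SignType, v = Pi.single i (s : R) := by
  obtain ⟨i, hi⟩ := card_le_one_iff_subset_singleton.mp h
  obtain ⟨s, hs⟩ := hv i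
  refine ⟨i, s, funext fun k => ?_⟩
  by_cases hk : k = i
  · simp [hk, hs]
  · have : k ∉ ({i | v i ≠ 0} : Finset m) := fun hmem => hk (mem_singleton.mp (hi hmem))
    simpa [hk] using this

/-- A TU matrix with at most two nonzero entries in every column is strongly unimodular. -/
theorem isStronglyUnimodular_of_le_two_nonzeros_per_col {m n : Type*}
    [Fintype m] [DecidableEq m] [DecidableEq n]
    (A : Matrix m n ℚ) (hTU : A.IsTotallyUnimodular)
    (h : ∀ j, (Finset.univ.filter fun i => A i j ≠ 0).card ≤ 2) :
    IsStronglyUnimodular A := by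
  refine ⟨hTU, fun i j hAij => ?_⟩
  have : Nonempty m := ⟨i⟩
  have hentries : ∀ k, Function.update (Aᵀ j) i 0 k ∈ Set.range SignType.cast := by
    intro k
    by_cases hk : k = i
    · exact ⟨0, by simp [hk]⟩
    · simpa [hk] using hTU.apply k j
  have hcard : #{k | Function.update (Aᵀ j) i 0 k ≠ 0} ≤ 1 := by
    rw [filter_update_zero_ne_zero, card_erase_of_mem (mem_filter.mpr ⟨mem_univ i, hAij⟩)]
    exact Nat.sub_le_of_le_add (h j)
  obtain ⟨i', s, hcol⟩ := exists_eq_single_signType_of_card_ne_zero_le_one hentries hcard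
  rw [updateRow_update_eq_updateCol_update, hcol]
  exact hTU.updateCol_single j i' s
end

section
/- If A is a totally unimodular matrix having at most two nonzero entries in every row, then A is strongly unimodular. -/
lemma signRange_mul {a b : ℚ} (ha : a ∈ Set.range SignType.cast)
    (hb : b ∈ Set.range SignType.cast) : a * b ∈ Set.range SignType.cast := by
  obtain ⟨s, rfl⟩ := ha
  obtain ⟨t, rfl⟩ := hb
  exact ⟨s * t, by push_cast; ring⟩

lemma signRange_neg_one_pow (k : ℕ) : ((-1 : ℚ)) ^ k ∈ Set.range SignType.cast := by
  rcases Nat.even_or_odd k with hk | hk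
  · exact ⟨1, by rw [hk.neg_one_pow]; simp⟩
  · exact ⟨-1, by rw [hk.neg_one_pow]; simp⟩

/-- A TU matrix with at most two nonzero entries in every row is strongly unimodular. -/
theorem isStronglyUnimodular_of_le_two_nonzeros_per_row {m n : Type*}
    [Fintype n] [DecidableEq m] [DecidableEq n]
    (A : Matrix m n ℚ) (hTU : A.IsTotallyUnimodular)
    (h : ∀ i, (Finset.univ.filter fun j => A i j ≠ 0).card ≤ 2) :
    IsStronglyUnimodular A := by
  refine ⟨hTU, fun i j hij => ?_⟩
  set A' : Matrix m n ℚ := A.updateRow i (Function.update (A i) j 0) with hA'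
  intro k f g hf hg
  by_cases hi : ∀ x, f x ≠ i
  · have heq : A'.submatrix f g = A.submatrix f g := by
      ext x y
      simp [A', Matrix.submatrix_apply, Matrix.updateRow_ne (hi x)]
    rw [heq]
    exact hTU k f g hf hg
  push_neg at hi
  obtain ⟨k₀, hk₀⟩ := hi
  -- row i of A' has at most one nonzero entry among the selected columns
  have hA'ij : A' i j = 0 := by simp [A']
  have hA'i : ∀ c, c ≠ j → A' i c = A i c := by
    intro c hc; simp [A', Function.update_of_ne hc]
  have huniq : ∀ l l' : Fin k, A' i (g l) ≠ 0 → A' i (g l') ≠ 0 → l = l' := by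
    intro l l' hl hl'
    have hS : ((Finset.univ.filter fun c => A i c ≠ 0).erase j).card ≤ 1 := by
      have hjmem : j ∈ (Finset.univ.filter fun c => A i c ≠ 0) := by
        simp [hij]
      have h1 := Finset.card_erase_of_mem hjmem
      have h2 := h i
      omega
    have hmem : ∀ l'' : Fin k, A' i (g l'') ≠ 0 →
        g l'' ∈ (Finset.univ.filter fun c => A i c ≠ 0).erase j := by
      intro l'' hl''
      have hne : g l'' ≠ j := by
        intro hc; rw [hc, hA'ij] at hl''; exact hl'' rfl
      rw [Finset.mem_erase]
      refine ⟨hne, ?_⟩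
      simp only [Finset.mem_filter, Finset.mem_univ, true_and]
      rw [← hA'i _ hne]; exact hl''
    exact hg (Finset.card_le_one.mp hS _ (hmem l hl) _ (hmem l' hl'))
  match k, f, g, hf, hg, k₀, hk₀, huniq with
  | k + 1, f, g, hf, hg, k₀, hk₀, huniq =>
  rw [Matrix.det_succ_row _ k₀]
  have hentry : ∀ l, (A'.submatrix f g) k₀ l = A' i (g l) := by
    intro l; simp [Matrix.submatrix_apply, hk₀]
  by_cases hz : ∀ l, A' i (g l) = 0
  · refine ⟨0, ?_⟩
    rw [Finset.sum_eq_zero]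
    · simp
    intro l _
    rw [hentry, hz l]
    ring
  push_neg at hz
  obtain ⟨l₀, hl₀⟩ := hz
  rw [Finset.sum_eq_single l₀]
  · -- the single term
    have hminor : (A'.submatrix f g).submatrix k₀.succAbove l₀.succAbove
        = A.submatrix (f ∘ k₀.succAbove) (g ∘ l₀.succAbove) := by
      ext x y
      have hne : f (k₀.succAbove x) ≠ i := by
        rw [← hk₀]
        exact fun hc => (Fin.succAbove_ne k₀ x) (hf hc)
      simp [Matrix.submatrix_apply, A', Matrix.updateRow_ne hne]
    rw [hentry, hminor]
    refine signRange_mul (signRange_mul (signRange_neg_one_pow _) ?_) ?_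
    · by_cases hc : g l₀ = j
      · rw [hc, hA'ij]; exact ⟨0, by simp⟩
      · rw [hA'i _ hc]; exact hTU.apply i (g l₀)
    · exact hTU k (f ∘ k₀.succAbove) (g ∘ l₀.succAbove)
        (hf.comp (Fin.succAbove_right_injective))
        (hg.comp (Fin.succAbove_right_injective))
  · intro l _ hother
    rw [hentry]
    have : A' i (g l) = 0 := by
      by_contra hc
      exact hother (huniq l l₀ hc hl₀)
    rw [this]; ring
  · intro habs
    exact absurd (Finset.mem_univ l₀) habs
end

section
/- If A is a strongly unimodular matrix, then the matrix obtained from A by appending a unit column (a column with exactly one nonzero entry, that entry being 1 or -1) is strongly unimodular; likewise, the matrix obtained from A by appending a unit row (a row with exactly one nonzero entry, that entry being 1 or -1) is strongly unimodular. -/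
/-!
Strong unimodularity is invariant under transposition, so it suffices to append rows. A row of
the form `Pi.single j s` with `s : SignType` (a unit row, or a zero row when `s = 0`) preserves
total unimodularity, by Laplace expansion along it (`Matrix.IsTotallyUnimodular.fromRows_unitlike`).
Zeroing an entry of the enlarged matrix either zeroes an entry of `A`, which leaves it totally
unimodular by hypothesis, or zeroes an entry of an appended row, which leaves a row of the same
form.
-/

open Matrix Function

section

variable {m m' n R : Type*}

theorem Matrix.transpose_updateRow_update [DecidableEq m] [DecidableEq n] (A : Matrix m n R)
    (i : m) (j : n) (c : R) :
    (A.updateRow i (update (A i) j c))ᵀ = Aᵀ.updateRow j (update (Aᵀ j) i c) := by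
  ext j' i'
  by_cases hi : i' = i <;> by_cases hj : j' = j <;> simp [updateRow_apply, hi, hj]

theorem Matrix.fromRows_updateRow_inl [DecidableEq m] [DecidableEq m'] (A : Matrix m n R)
    (B : Matrix m' n R) (i : m) (r : n → R) :
    (fromRows A B).updateRow (Sum.inl i) r = fromRows (A.updateRow i r) B := by
  ext (i' | i') j <;> simp [updateRow_apply]

theorem Matrix.fromRows_updateRow_inr [DecidableEq m] [DecidableEq m'] (A : Matrix m n R)
    (B : Matrix m' n R) (i : m') (r : n → R) :
    (fromRows A B).updateRow (Sum.inr i) r = fromRows A (B.updateRow i r) := by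
  ext (i' | i') j <;> simp [updateRow_apply]

theorem exists_signType_eq_pi_single [DecidableEq m] [Zero R] [One R] [Neg R] {a : m → R}
    {i₀ : m}
    (h₁ : a i₀ = 1 ∨ a i₀ = -1) (h₀ : ∀ i, i ≠ i₀ → a i = 0) :
    ∃ s : SignType, a = Pi.single i₀ (s : R) := by
  obtain ⟨s, hs⟩ : ∃ s : SignType, (s : R) = a i₀ :=
    h₁.elim (fun h => ⟨1, by simp [h]⟩) (fun h => ⟨-1, by simp [h]⟩)
  refine ⟨s, funext fun i => ?_⟩
  by_cases hi : i = i₀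
  · subst hi; simp [hs]
  · simp [hi, h₀ i hi]

theorem exists_update_pi_single_zero [DecidableEq n] [Zero R] [One R] [Neg R] (j' j : n)
    (s : SignType) :
    ∃ s' : SignType, update (Pi.single j' (s : R) : n → R) j 0 = Pi.single j' (s' : R) := by
  by_cases h : j = j'
  · subst h
    exact ⟨0, by simp [Pi.single, update_idem]⟩
  · exact ⟨s, update_eq_self_iff.mpr (by simp [h])⟩

end

section

variable {m m' n n' : Type*} [DecidableEq m] [DecidableEq n]

theorem IsStronglyUnimodular.transpose {A : Matrix m n ℚ} (hA : IsStronglyUnimodular A) :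
    IsStronglyUnimodular Aᵀ :=
  ⟨hA.1.transpose, fun j i hij => by
    rw [← transpose_updateRow_update]
    exact (hA.2 i j hij).transpose⟩

theorem IsStronglyUnimodular.fromRows_unitlike [DecidableEq m'] {A : Matrix m n ℚ}
    {B : Matrix m' n ℚ} (hA : IsStronglyUnimodular A)
    (hB : ∀ i, ∃ j, ∃ s : SignType, B i = Pi.single j (s : ℚ)) :
    IsStronglyUnimodular (fromRows A B) := by
  refine ⟨hA.1.fromRows_unitlike fun _ => hB, ?_⟩
  rintro (i | i) j hij
  · rw [fromRows_updateRow_inl]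
    exact (hA.2 i j hij).fromRows_unitlike fun _ => hB
  · rw [fromRows_updateRow_inr]
    refine hA.1.fromRows_unitlike fun _ i' => ?_
    obtain ⟨j', s, hs⟩ := hB i
    rcases eq_or_ne i' i with rfl | hi'
    · obtain ⟨s', hs'⟩ := exists_update_pi_single_zero (R := ℚ) j' j s
      exact ⟨j', s', by rw [updateRow_self]; exact (congrArg (update · j 0) hs).trans hs'⟩
    · rw [updateRow_ne hi']
      exact hB i'

theorem IsStronglyUnimodular.fromCols_unitlike [DecidableEq n'] {A : Matrix m n ℚ}
    {B : Matrix m n' ℚ} (hA : IsStronglyUnimodular A)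
    (hB : ∀ j, ∃ i, ∃ s : SignType, Bᵀ j = Pi.single i (s : ℚ)) :
    IsStronglyUnimodular (fromCols A B) := by
  simpa only [← transpose_fromCols, transpose_transpose] using
    (hA.transpose.fromRows_unitlike hB).transpose

end

/-- Appending a unit column (a column with a single nonzero entry equal to 1 or -1), or a
unit row, to a strongly unimodular matrix yields a strongly unimodular matrix. -/
theorem isStronglyUnimodular_append_unit_col_row {m n : Type*} [DecidableEq m] [DecidableEq n]
    (A : Matrix m n ℚ) (hA : IsStronglyUnimodular A) :
    (∀ (a : m → ℚ) (i₀ : m), (a i₀ = 1 ∨ a i₀ = -1) → (∀ i, i ≠ i₀ → a i = 0) →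
      IsStronglyUnimodular (Matrix.fromCols A (Matrix.of fun i (_ : Unit) => a i))) ∧
    (∀ (b : n → ℚ) (j₀ : n), (b j₀ = 1 ∨ b j₀ = -1) → (∀ j, j ≠ j₀ → b j = 0) →
      IsStronglyUnimodular (Matrix.fromRows A (Matrix.of fun (_ : Unit) j => b j))) := by
  refine ⟨fun a i₀ h₁ h₀ => ?_, fun b j₀ h₁ h₀ => ?_⟩
  · obtain ⟨s, rfl⟩ := exists_signType_eq_pi_single h₁ h₀
    exact hA.fromCols_unitlike fun _ => ⟨i₀, s, rfl⟩
  · obtain ⟨s, rfl⟩ := exists_signType_eq_pi_single h₁ h₀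
    exact hA.fromRows_unitlike fun _ => ⟨j₀, s, rfl⟩
end

section
/- If a strongly unimodular matrix N contains, up to row and column permutations and scaling of rows and columns by -1, the 3-by-3 matrix N2 = [[1,1,0],[0,1,1],[1,1,1]] as a submatrix, then a contradiction follows; equivalently, no strongly unimodular matrix has a submatrix which, after permuting rows and columns and multiplying some rows and columns by -1, equals [[1,1,0],[0,1,1],[1,1,1]]. -/
/-!
Zeroing the entry in position `(2, 1)` of `N2` gives `[[1,1,0],[0,1,1],[1,0,1]]`, whose determinant
is `2`. Zeroing an entry commutes with taking submatrices and with scaling rows and columns by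
signs, and sign scalings preserve total unimodularity, so zeroing the corresponding entry of a
strongly unimodular matrix containing `N2` would produce a matrix that is not totally unimodular.
-/

open Function

lemma prod_mem_range_signTypeCast {ι R : Type*} [CommRing R] (s : Finset ι) {r : ι → R}
    (hr : ∀ i, r i ∈ Set.range SignType.cast) : ∏ i ∈ s, r i ∈ Set.range SignType.cast := by
  choose t ht using hr
  exact ⟨∏ i ∈ s, t i, by simp only [← ht]; exact map_prod SignType.castHom t s⟩

namespace Matrix

variable {m m' n n' R : Type*} [CommRing R]
  [DecidableEq m] [DecidableEq m'] [DecidableEq n] [DecidableEq n']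

def zeroEntry (A : Matrix m n R) (i : m) (j : n) : Matrix m n R :=
  A.updateRow i (update (A i) j 0)

lemma zeroEntry_apply (A : Matrix m n R) (i a : m) (j b : n) :
    A.zeroEntry i j a b = if a = i ∧ b = j then 0 else A a b := by
  by_cases ha : a = i
  · subst ha
    by_cases hb : b = j <;> simp [zeroEntry, hb]
  · simp [zeroEntry, ha]

lemma submatrix_zeroEntry (A : Matrix m n R) {f : m' → m} {g : n' → n}
    (hf : Injective f) (hg : Injective g) (i : m') (j : n') :
    (A.zeroEntry (f i) (g j)).submatrix f g = (A.submatrix f g).zeroEntry i j := by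
  ext a b
  simp only [submatrix_apply, zeroEntry_apply, hf.eq_iff, hg.eq_iff]

lemma diagonal_mul_zeroEntry_mul_diagonal [Fintype m] [Fintype n] (r : m → R) (c : n → R)
    (A : Matrix m n R) (i : m) (j : n) :
    diagonal r * A.zeroEntry i j * diagonal c = (diagonal r * A * diagonal c).zeroEntry i j := by
  ext a b
  simp only [mul_diagonal, diagonal_mul, zeroEntry_apply]
  split_ifs <;> simp

lemma IsTotallyUnimodular.diagonal_mul_mul_diagonal [Fintype m] [Fintype n]
    {A : Matrix m n R} (hA : A.IsTotallyUnimodular) {r : m → R} {c : n → R}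
    (hr : ∀ i, r i ∈ Set.range SignType.cast) (hc : ∀ j, c j ∈ Set.range SignType.cast) :
    (diagonal r * A * diagonal c).IsTotallyUnimodular := by
  intro k f g hf hg
  have hsub : (diagonal r * A * diagonal c).submatrix f g =
      diagonal (r ∘ f) * A.submatrix f g * diagonal (c ∘ g) := by
    ext a b
    simp [mul_diagonal, diagonal_mul]
  obtain ⟨x, hx⟩ := prod_mem_range_signTypeCast Finset.univ (fun i => hr (f i))
  obtain ⟨y, hy⟩ := prod_mem_range_signTypeCast Finset.univ (fun j => hc (g j))
  obtain ⟨z, hz⟩ := hA k f g hf hg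
  refine ⟨x * z * y, ?_⟩
  rw [hsub, det_mul, det_mul, det_diagonal, det_diagonal]
  simp [hx, hy, hz]

end Matrix

open Matrix in
/-- No strongly unimodular matrix contains, up to row and column permutations and scaling
of rows and columns by -1, the matrix N2 = [[1,1,0],[0,1,1],[1,1,1]] as a submatrix. -/
theorem no_N2_submatrix_of_isStronglyUnimodular {m n : Type*} [DecidableEq m] [DecidableEq n]
    (A : Matrix m n ℚ) (hA : IsStronglyUnimodular A) :
    ¬ ∃ (f : Fin 3 → m) (g : Fin 3 → n) (r c : Fin 3 → ℚ),
        Function.Injective f ∧ Function.Injective g ∧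
        (∀ i, r i = 1 ∨ r i = -1) ∧ (∀ j, c j = 1 ∨ c j = -1) ∧
        (∀ i j, r i * A (f i) (g j) * c j =
          (!![1, 1, 0; 0, 1, 1; 1, 1, 1] : Matrix (Fin 3) (Fin 3) ℚ) i j) := by
  rintro ⟨f, g, r, c, hf, hg, hr, hc, h⟩
  have sign_mem : ∀ x : ℚ, x = 1 ∨ x = -1 → x ∈ Set.range SignType.cast := by
    rintro x (rfl | rfl)
    exacts [⟨1, rfl⟩, ⟨-1, rfl⟩]
  have hN2 : diagonal r * A.submatrix f g * diagonal c = !![1, 1, 0; 0, 1, 1; 1, 1, 1] := by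
    ext i j
    simpa [mul_diagonal, diagonal_mul] using h i j
  have hA21 : A (f 2) (g 1) ≠ 0 := fun h0 => by simpa [h0] using h 2 1
  have hS : ((A.submatrix f g).zeroEntry 2 1).IsTotallyUnimodular := by
    rw [← submatrix_zeroEntry A hf hg]
    exact (hA.2 _ _ hA21).submatrix f g
  have hN2' :=
    hS.diagonal_mul_mul_diagonal (fun i => sign_mem _ (hr i)) (fun j => sign_mem _ (hc j))
  rw [diagonal_mul_zeroEntry_mul_diagonal, hN2] at hN2'
  have hdet :
      det ((!![1, 1, 0; 0, 1, 1; 1, 1, 1] : Matrix (Fin 3) (Fin 3) ℚ).zeroEntry 2 1) = 2 := by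
    simp [det_fin_three, zeroEntry_apply, one_add_one_eq_two]
  obtain ⟨s, hs⟩ := hN2' 3 id id injective_id injective_id
  rw [submatrix_id_id, hdet] at hs
  cases s <;> norm_num at hs
end
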